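/- arXiv:2203.09131 — 3 statements merged into one kernel-verified Lean document; each statement's English description precedes it below -/
import Mathlib

section
/- Let M be a uniformizable dual t-motive over k̄ (the algebraic closure of F_q(θ) in C_∞). Then the de Rham pairing H_dR(M, k̄) × H_Betti(M) → C_∞, (ω, γ) ↦ ∫_γ ω := ω(γ), is non-degenerate: if ω ∈ H_dR(M, k̄) satisfies ∫_γ ω = 0 for all γ ∈ H_Betti(M) then ω = 0, and if γ ∈ H_Betti(M) satisfies ∫_γ ω = 0 for all ω ∈ H_dR(M, k̄) then γ = 0. -/
/-! The Betti lattice spans `M†/(t−θ)M†` over `C_∞`, so a de Rham class whose integrals all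
vanish has zero extension, hence is zero. Conversely, the coordinate functionals of a `k̄`-basis of
`M/(t−θ)M` extend to the coordinate functionals of the induced `C_∞`-basis, so a Betti class with
vanishing integrals maps to `0`; the map is injective because an `F_q[t]`-basis of `H_Betti(M)`
stays `C_∞`-linearly independent and `a ↦ a(θ)` is injective. -/

open Module

section Extension

variable {k C N W : Type*} [AddCommGroup N] [AddCommGroup W]

theorem LinearMap.eq_zero_of_extension_eq_zero [Field k] [Semiring C] [Nontrivial C]
    [Algebra k C] [Module k N] [Module k W] [Module C W] {ν : N →ₗ[k] W} {ω : N →ₗ[k] k}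
    {F : W →ₗ[C] C} (hF : ∀ x, F (ν x) = algebraMap k C (ω x)) (hF₀ : F = 0) : ω = 0 := by
  ext x
  apply (algebraMap k C).injective
  simp [← hF, hF₀]

variable [CommSemiring k] [CommSemiring C] [Algebra k C] [Module k N] [Module k W] [Module C W]
  {ν : N →ₗ[k] W} {ext : (N →ₗ[k] k) → (W →ₗ[C] C)}
  {ι : Type*} {bn : Basis ι k N} {bw : Basis ι C W}

theorem extension_coord_eq (hext : ∀ ω x, ext ω (ν x) = algebraMap k C (ω x))
    (hbw : ∀ i, bw i = ν (bn i)) (i : ι) : ext (bn.coord i) = bw.coord i := by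
  refine bw.ext fun l => ?_
  rw [hbw, hext, ← hbw]
  simp only [Basis.coord_apply, Basis.repr_self]
  rcases eq_or_ne l i with rfl | hli <;> simp [*]

theorem eq_zero_of_forall_extension_eq_zero (hext : ∀ ω x, ext ω (ν x) = algebraMap k C (ω x))
    (hbw : ∀ i, bw i = ν (bn i)) {w : W} (hw : ∀ ω, ext ω w = 0) : w = 0 :=
  bw.forall_coord_eq_zero_iff.mp fun i => extension_coord_eq hext hbw i ▸ hw (bn.coord i)

end Extension

theorem LinearMap.injective_of_linearIndependent_comp_basis {R S M W ι : Type*} [Fintype ι]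
    [Semiring R] [Ring S] [AddCommGroup M] [AddCommGroup W] [Module R M] [Module S W]
    {σ : R →+* S} (hσ : Function.Injective σ) (f : M →ₛₗ[σ] W) (b : Basis ι R M)
    (hf : LinearIndependent S (f ∘ b)) : Function.Injective f := by
  refine (injective_iff_map_eq_zero f).mpr fun x hx => b.forall_coord_eq_zero_iff.mp fun i => ?_
  have hsum : ∑ l, σ (b.repr x l) • f (b l) = 0 := by
    simp only [← f.map_smulₛₗ, ← map_sum, b.sum_repr, hx]
  have hcoeff := Fintype.linearIndependent_iff.mp hf (fun l => σ (b.repr x l)) hsum i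
  exact hσ (hcoeff.trans (map_zero σ).symm)

theorem deRham_pairing_nondegenerate_general
    (Fq kbar Cinf : Type)
    [Field Fq] [Field kbar] [Field Cinf] [Algebra kbar Cinf]
    (r : ℕ)
    (N : Type) [AddCommGroup N] [Module kbar N]
    (W : Type) [AddCommGroup W] [Module kbar W] [Module Cinf W]
    (ν : N →ₗ[kbar] W)
    (HB : Type) [AddCommGroup HB] [Module (Polynomial Fq) HB]
    (ev : Polynomial Fq →+* Cinf) (hev : Function.Injective ev)
    (j : HB →+ W)
    (hj : ∀ (a : Polynomial Fq) (γ : HB), j (a • γ) = ev a • j γ)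
    (ext : (N →ₗ[kbar] kbar) → (W →ₗ[Cinf] Cinf))
    (hext : ∀ (ω : N →ₗ[kbar] kbar) (x : N),
      ext ω (ν x) = algebraMap kbar Cinf (ω x))
    (hBetti : ∃ b : Module.Basis (Fin r) (Polynomial Fq) HB,
      ∃ bw : Module.Basis (Fin r) Cinf W, ∀ i, bw i = j (b i))
    (hN : ∃ bn : Module.Basis (Fin r) kbar N,
      ∃ bw : Module.Basis (Fin r) Cinf W, ∀ i, bw i = ν (bn i)) :
    (∀ ω : N →ₗ[kbar] kbar, (∀ γ : HB, ext ω (j γ) = 0) → ω = 0) ∧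
    (∀ γ : HB, (∀ ω : N →ₗ[kbar] kbar, ext ω (j γ) = 0) → γ = 0) := by
  obtain ⟨b, bw, hbw⟩ := hBetti
  obtain ⟨bn, bw', hbw'⟩ := hN
  let jₛ : HB →ₛₗ[ev] W := { j with map_smul' := hj }
  have hjb : ⇑jₛ ∘ ⇑b = ⇑bw := funext fun i => (hbw i).symm
  have hjₛ : Function.Injective jₛ :=
    jₛ.injective_of_linearIndependent_comp_basis hev b (hjb ▸ bw.linearIndependent)
  refine ⟨fun ω hω => LinearMap.eq_zero_of_extension_eq_zero (hext ω) ?_, fun γ hγ => ?_⟩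
  · exact bw.ext fun i => by simp [hbw, hω]
  · exact hjₛ <| (eq_zero_of_forall_extension_eq_zero hext hbw' hγ).trans jₛ.map_zero.symm

/-- the de Rham pairing of a uniformizable dual `t`-motive `M` over `k̄`
is non-degenerate.

Model (following the context): `N := M/(t−θ)M` is a `k̄`-vector space and
`W := M†/(t−θ)M†` is a `C_∞`-vector space receiving `N` via `ν`, with `W` the base
change of `N` to `C_∞` (hypothesis `hN`: a `k̄`-basis of `N` maps to a `C_∞`-basis
of `W`).  The de Rham module `H_dR(M,k̄) = Hom_{k̄}(N, k̄)`, and each `ω` extends to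
the `C_∞`-linear functional `ext ω` on `W` (hypothesis `hext`).  The Betti module
`HB` is a free `F_q[t]`-module of rank `r`, mapped to `W` by `γ ↦ γ̄` semilinearly
over the (injective) evaluation `ev : F_q[t] → C_∞`, `a ↦ a(θ)`; uniformizability
says an `F_q[t]`-basis of `HB` maps to a `C_∞`-basis of `W` (hypothesis `hBetti`).
The pairing is `(ω, γ) ↦ ∫_γ ω := (ext ω)(j γ)`; conclusion: it is non-degenerate
in both variables. -/
theorem deRham_pairing_nondegenerate
    (Fq kbar Cinf : Type)
    [Field Fq] [Field kbar] [Field Cinf] [Algebra kbar Cinf]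
    (r : ℕ) (hr : 0 < r)
    (N : Type) [AddCommGroup N] [Module kbar N]
    (W : Type) [AddCommGroup W] [Module kbar W] [Module Cinf W]
    [IsScalarTower kbar Cinf W]
    (ν : N →ₗ[kbar] W)
    (HB : Type) [AddCommGroup HB] [Module (Polynomial Fq) HB]
    (ev : Polynomial Fq →+* Cinf) (hev : Function.Injective ev)
    (j : HB →+ W)
    (hj : ∀ (a : Polynomial Fq) (γ : HB), j (a • γ) = ev a • j γ)
    (ext : (N →ₗ[kbar] kbar) → (W →ₗ[Cinf] Cinf))
    (hext : ∀ (ω : N →ₗ[kbar] kbar) (x : N),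
      ext ω (ν x) = algebraMap kbar Cinf (ω x))
    (hBetti : ∃ b : Module.Basis (Fin r) (Polynomial Fq) HB,
      ∃ bw : Module.Basis (Fin r) Cinf W, ∀ i, bw i = j (b i))
    (hN : ∃ bn : Module.Basis (Fin r) kbar N,
      ∃ bw : Module.Basis (Fin r) Cinf W, ∀ i, bw i = ν (bn i)) :
    (∀ ω : N →ₗ[kbar] kbar, (∀ γ : HB, ext ω (j γ) = 0) → ω = 0) ∧
    (∀ γ : HB, (∀ ω : N →ₗ[kbar] kbar, ext ω (j γ) = 0) → γ = 0) :=
  deRham_pairing_nondegenerate_general Fq kbar Cinf r N W ν HB ev hev j hj ext hext hBetti hN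
end

section
/- Let K be a geometric CM field over F_q(t) with maximal totally real subfield K^+, and let M be a CM dual t-motive with generalized CM type (K, Ξ) where Ξ = Σ_{ξ∈J_K} m_ξ ξ. Then the quotient M_{C_∞}/σM_{C_∞} is isomorphic as a C_∞[t]-module to the product ∏_{ξ∈J_K} C_∞[t]/((t−θ)^{m_ξ}). Consequently, the Hodge–Pink weights of M are (−m_ξ)_{ξ∈J_K}. -/
/-!
By the Chinese remainder theorem `M / I_Ξ M` is the product of the `M / P_ξ^{m_ξ} M`, and each
factor is compared with `F[t] / ((t - θ)^{m_ξ})` through `O / P_ξ^{m_ξ}`.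

Modulo a maximal ideal `P`, a projective `M` of rank one at `P` is generated by one element `x`:
`M ≠ P M` by Nakayama's lemma for projective modules applied to `M_P`, and two classes independent
over `O / P` would give two independent elements of `M_P`. Then `x` generates `M` modulo every
`P^m`, and a linear form `f` with `f x ∉ P` shows that `r ↦ r • x` has kernel exactly `P^m`.

The map `F[t] → O / P_ξ^m` has kernel `((t - θ)^m)` because `t - θ ∈ P_ξ` while
`(t - θ)^k ∉ P_ξ^{k+1}`: the other factors of `(t - θ) = ∏ P_ξ` are coprime to `P_ξ`, and
`P_ξ^k ≠ P_ξ^{k+1}` by the dimension count. Both sides have dimension `m` over `F`.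
-/

open Polynomial

section Modules

variable {R N : Type*} [CommRing R] [AddCommGroup N] [Module R N]

lemma LinearMap.apply_mem_of_mem_smul_top (f : N →ₗ[R] R) {I : Ideal R} {x : N}
    (hx : x ∈ I • (⊤ : Submodule R N)) : f x ∈ I := by
  simpa using Submodule.smul_top_le_comap_smul_top I f hx

lemma Submodule.sup_pow_smul_top_eq_top {L : Submodule R N} {I : Ideal R} (h : L ⊔ I • ⊤ = ⊤)
    (n : ℕ) : L ⊔ I ^ n • ⊤ = ⊤ := by
  induction n with
  | zero => simp
  | succ n ih =>
    refine top_unique ?_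
    calc ⊤ = L ⊔ I ^ n • (L ⊔ I • ⊤) := by rw [h, ih]
      _ = L ⊔ (I ^ n • L ⊔ I ^ (n + 1) • ⊤) := by
        rw [Submodule.smul_sup, pow_succ, ← Ideal.smul_eq_mul, Submodule.smul_assoc]
      _ ≤ L ⊔ I ^ (n + 1) • ⊤ := by
        rw [← sup_assoc, sup_eq_left.mpr (Submodule.smul_le_right : I ^ n • L ≤ L)]

lemma Module.Projective.exists_apply_notMem [Module.Projective R N] {I : Ideal R} {x : N}
    (hx : x ∉ I • (⊤ : Submodule R N)) : ∃ f : N →ₗ[R] R, f x ∉ I := by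
  obtain ⟨s, hs⟩ := Module.projective_def.mp ‹Module.Projective R N›
  by_contra! h
  apply hx
  rw [← hs x, Finsupp.linearCombination_apply, Finsupp.sum]
  exact Submodule.sum_mem _ fun k _ => Submodule.smul_mem_smul (h (Finsupp.lapply k ∘ₗ s)) trivial

lemma Module.Projective.subsingleton_of_smul_top_eq_top [Module.Projective R N] {J : Ideal R}
    (hJ : J ≤ (⊥ : Ideal R).jacobson) (h : J • (⊤ : Submodule R N) = ⊤) : Subsingleton N := by
  obtain ⟨s, hs⟩ := Module.projective_def.mp ‹Module.Projective R N›
  have hcoord (f : N →ₗ[R] R) (x : N) : f x ∈ J :=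
    f.apply_mem_of_mem_smul_top (by rw [h]; trivial)
  refine subsingleton_of_forall_eq 0 fun x => ?_
  have hsx : s x = ∑ k ∈ (s x).support, s x k • s k := by
    conv_lhs => rw [← hs x]
    rw [Finsupp.linearCombination_apply, Finsupp.sum, map_sum]
    simp
  -- Linear forms map `N = J • N` into `J`, so the coordinate ideal `U` of `x` has `U ≤ J • U`.
  let U : Ideal R := Ideal.span (Set.range (s x))
  have hUle : U ≤ J • U := Ideal.span_le.mpr <| by
    rintro _ ⟨k₀, rfl⟩
    rw [hsx, Finsupp.finsetSum_apply]
    refine Submodule.sum_mem _ fun k _ => ?_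
    have hk : s x k ∈ U := Ideal.subset_span ⟨k, rfl⟩
    simpa [mul_comm] using Submodule.smul_mem_smul (hcoord (Finsupp.lapply k₀ ∘ₗ s) k) hk
  have hU : U = ⊥ := Submodule.eq_bot_of_le_smul_of_le_jacobson_bot J U
    (Submodule.fg_span (Finsupp.finite_range _)) hUle hJ
  have hsx0 : s x = 0 := Finsupp.ext fun k => by
    have hk : s x k ∈ U := Ideal.subset_span ⟨k, rfl⟩
    rwa [hU, Ideal.mem_bot] at hk
  rw [← hs x, hsx0, map_zero]

open IsLocalRing TensorProduct in
lemma IsLocalRing.linearIndependent_pair_of_flat [IsLocalRing R] [Module.Flat R N] {u v : N}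
    (h : ∀ a b : R, a • u + b • v ∈ maximalIdeal R • (⊤ : Submodule R N) →
      a ∈ maximalIdeal R ∧ b ∈ maximalIdeal R) :
    LinearIndependent R ![u, v] := by
  apply Module.IsLocalRing.linearIndependent_of_flat
  rw [show ⇑(TensorProduct.mk R (ResidueField R) N 1) ∘ ![u, v] = ![1 ⊗ₜ u, 1 ⊗ₜ v] by
    ext i; fin_cases i <;> rfl, LinearIndependent.pair_iff]
  intro s t hst
  obtain ⟨a, rfl⟩ := residue_surjective s
  obtain ⟨b, rfl⟩ := residue_surjective t
  have hmem : a • u + b • v ∈ maximalIdeal R • (⊤ : Submodule R N) := by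
    have : TensorProduct.mk R (ResidueField R) N 1 (a • u + b • v) = 0 := by
      rw [← hst]
      simp [tmul_add, ← ResidueField.algebraMap_eq, algebraMap_smul]
    rw [← LinearMap.ker_tensorProductMk]
    exact this
  simpa [residue_eq_zero_iff] using h a b hmem

noncomputable def Submodule.quotientProdSMulTopEquivPi {ι : Type*} [Fintype ι] (I : ι → Ideal R)
    (hI : Pairwise fun i j => IsCoprime (I i) (I j)) :
    (N ⧸ (∏ i, I i) • (⊤ : Submodule R N)) ≃ₗ[R] ((i : ι) → N ⧸ I i • (⊤ : Submodule R N)) :=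
  have hker : (∏ i, I i) • (⊤ : Submodule R N) =
      LinearMap.ker (LinearMap.pi fun i ↦ TensorProduct.mk R (R ⧸ I i) N 1) := by
    rw [Ideal.ker_tensorProductMk_quotient N I hI,
      Ideal.prod_eq_iInf_of_pairwise_isCoprime fun i _ j _ hij => hI hij]
    simp
  Submodule.quotEquivOfEq _ _ hker ≪≫ₗ
    LinearMap.quotKerEquivOfSurjective _ (Ideal.pi_tensorProductMk_quotient_surjective N I hI) ≪≫ₗ
    LinearEquiv.piCongrRight fun i ↦ TensorProduct.quotTensorEquivQuotSMul N (I i)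

end Modules

section LocalizationAtMaximal

open IsLocalRing

variable {A M : Type*} [CommRing A] [AddCommGroup M] [Module A M] {P : Ideal A} [P.IsMaximal]

lemma mem_smul_top_of_smul_mem_of_notMem {s : A} (hs : s ∉ P) {z : M}
    (h : s • z ∈ P • (⊤ : Submodule A M)) : z ∈ P • (⊤ : Submodule A M) := by
  obtain ⟨c, p, hp, hcs⟩ := Ideal.IsMaximal.exists_inv ‹_› hs
  rw [← one_smul A z, ← hcs, add_smul, mul_smul]
  exact add_mem (Submodule.smul_mem _ c h) (Submodule.smul_mem_smul hp trivial)

lemma LocalizedModule.mk_mem_maximalIdeal_smul_top_iff (z : M) (s : P.primeCompl) :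
    LocalizedModule.mk z s ∈ maximalIdeal (Localization.AtPrime P) •
      (⊤ : Submodule (Localization.AtPrime P) (LocalizedModule P.primeCompl M)) ↔
      z ∈ P • (⊤ : Submodule A M) := by
  rw [← Localization.AtPrime.map_eq_maximalIdeal, ← Ideal.localized'_eq_map _ P.primeCompl,
    ← Submodule.localized'_top _ P.primeCompl (LocalizedModule.mkLinearMap P.primeCompl M),
    ← Submodule.localized'_smul, Submodule.mem_localized', IsLocalizedModule.mk_eq_mk']
  constructor
  · rintro ⟨m, hm, t, hmt⟩
    obtain ⟨u, hu⟩ := (IsLocalizedModule.mk'_eq_mk'_iff _ m z t s).mp hmt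
    refine mem_smul_top_of_smul_mem_of_notMem (u * t).2 ?_
    rw [Submonoid.coe_mul, mul_smul, ← Submonoid.smul_def, ← Submonoid.smul_def, hu]
    exact Submodule.smul_of_tower_mem _ _ (Submodule.smul_of_tower_mem _ _ hm)
  · exact fun hz => ⟨z, hz, s, rfl⟩

lemma LocalizedModule.linearIndependent_mk_pair [Module.Flat A M] {x y : M}
    (h : ∀ α β : A, α • x + β • y ∈ P • (⊤ : Submodule A M) → α ∈ P ∧ β ∈ P) :
    LinearIndependent (Localization.AtPrime P)
      ![LocalizedModule.mk x (1 : P.primeCompl), LocalizedModule.mk y 1] := by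
  apply IsLocalRing.linearIndependent_pair_of_flat
  intro a b hab
  induction a using Localization.induction_on with | _ p => ?_
  induction b using Localization.induction_on with | _ q => ?_
  obtain ⟨α, s⟩ := p
  obtain ⟨β, t⟩ := q
  rw [LocalizedModule.mk_smul_mk, LocalizedModule.mk_smul_mk, LocalizedModule.mk_add_mk,
    LocalizedModule.mk_mem_maximalIdeal_smul_top_iff] at hab
  obtain ⟨hα, hβ⟩ := h _ _ (by simpa [Submonoid.smul_def, smul_smul] using hab)
  simp only [Localization.mk_eq_mk', IsLocalization.AtPrime.mk'_mem_maximal_iff]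
  exact ⟨(Ideal.IsPrime.mem_or_mem inferInstance hα).resolve_left t.2,
    (Ideal.IsPrime.mem_or_mem inferInstance hβ).resolve_left s.2⟩

lemma exists_span_singleton_sup_smul_top_eq_top [Module.Projective A M]
    (hrk : Module.rank (Localization.AtPrime P) (LocalizedModule P.primeCompl M) = 1) :
    ∃ x : M, x ∉ P • (⊤ : Submodule A M) ∧ Submodule.span A {x} ⊔ P • ⊤ = ⊤ := by
  let := Ideal.Quotient.field P
  have hne : P • (⊤ : Submodule A M) ≠ ⊤ := by
    intro htop
    have : Module.Projective (Localization.AtPrime P) (LocalizedModule P.primeCompl M) :=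
      Module.projective_of_isLocalizedModule P.primeCompl (LocalizedModule.mkLinearMap _ M)
    have : Subsingleton (LocalizedModule P.primeCompl M) :=
      Module.Projective.subsingleton_of_smul_top_eq_top (maximalIdeal_le_jacobson _) <|
        top_unique fun w _ => by
          induction w using LocalizedModule.induction_on with
          | h z s =>
            exact (LocalizedModule.mk_mem_maximalIdeal_smul_top_iff z s).mpr (by rw [htop]; trivial)
    rw [rank_subsingleton'] at hrk
    exact zero_ne_one hrk
  obtain ⟨x, -, hx⟩ := SetLike.exists_of_lt (lt_top_iff_ne_top.mpr hne)
  refine ⟨x, hx, top_unique fun y _ => ?_⟩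
  by_contra hy
  have hli : LinearIndependent (A ⧸ P)
      ![Submodule.Quotient.mk (p := (P • ⊤ : Submodule A M)) x, Submodule.Quotient.mk y] := by
    rw [LinearIndependent.pair_iff' (by simpa [Submodule.Quotient.mk_eq_zero] using hx)]
    intro a ha
    obtain ⟨r, rfl⟩ := Ideal.Quotient.mk_surjective a
    rw [Module.Quotient.mk_smul_mk, Submodule.Quotient.eq] at ha
    exact hy (Submodule.mem_sup.mpr ⟨r • x, Submodule.mem_span_singleton.mpr ⟨r, rfl⟩,
      -(r • x - y), neg_mem ha, by abel⟩)
  have hxy : ∀ α β : A, α • x + β • y ∈ P • (⊤ : Submodule A M) → α ∈ P ∧ β ∈ P := by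
    intro α β hαβ
    have := LinearIndependent.pair_iff.mp hli (Ideal.Quotient.mk P α) (Ideal.Quotient.mk P β)
      (by rw [Module.Quotient.mk_smul_mk, Module.Quotient.mk_smul_mk, ← Submodule.Quotient.mk_add,
        Submodule.Quotient.mk_eq_zero]; exact hαβ)
    simpa [Ideal.Quotient.eq_zero_iff_mem] using this
  have := (LocalizedModule.linearIndependent_mk_pair hxy).cardinal_lift_le_rank
  rw [hrk] at this
  simp at this

lemma mem_pow_of_smul_mem_pow_smul_top [Module.Projective A M] {x : M}
    (hx : x ∉ P • (⊤ : Submodule A M)) {r : A} {m : ℕ}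
    (hr : r • x ∈ P ^ m • (⊤ : Submodule A M)) : r ∈ P ^ m := by
  obtain ⟨f, hf⟩ := Module.Projective.exists_apply_notMem hx
  have hrf : Ideal.Quotient.mk (P ^ m) r * Ideal.Quotient.mk (P ^ m) (f x) = 0 := by
    rw [← map_mul, Ideal.Quotient.eq_zero_iff_mem, ← smul_eq_mul, ← map_smul]
    exact f.apply_mem_of_mem_smul_top hr
  rw [← Ideal.Quotient.eq_zero_iff_mem]
  exact (Ideal.Quotient.isUnit_mk_pow_of_notMem P hf).mul_left_eq_zero.mp hrf

theorem nonempty_quotient_pow_smul_top_equiv [Module.Projective A M]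
    (hrk : Module.rank (Localization.AtPrime P) (LocalizedModule P.primeCompl M) = 1) (m : ℕ) :
    Nonempty ((M ⧸ P ^ m • (⊤ : Submodule A M)) ≃ₗ[A] A ⧸ P ^ m) := by
  obtain ⟨x, hx, hgen⟩ := exists_span_singleton_sup_smul_top_eq_top hrk
  let φ := (P ^ m • (⊤ : Submodule A M)).mkQ ∘ₗ LinearMap.toSpanSingleton A M x
  have hφ : Function.Surjective φ := by
    rw [← LinearMap.range_eq_top, LinearMap.range_comp, LinearMap.range_toSpanSingleton,
      Submodule.map_mkQ_eq_top, sup_comm]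
    exact Submodule.sup_pow_smul_top_eq_top hgen m
  have hker : LinearMap.ker φ = P ^ m := by
    ext r
    simp only [φ, LinearMap.mem_ker, LinearMap.comp_apply, LinearMap.toSpanSingleton_apply,
      Submodule.mkQ_apply, Submodule.Quotient.mk_eq_zero]
    exact ⟨mem_pow_of_smul_mem_pow_smul_top hx, fun hr => Submodule.smul_mem_smul hr trivial⟩
  exact ⟨(φ.quotKerEquivOfSurjective hφ).symm.trans (Submodule.quotEquivOfEq _ _ hker)⟩

end LocalizationAtMaximal

lemma pow_notMem_pow_succ_of_span_eq_prod {R ι : Type*} [CommRing R] [Fintype ι]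
    {P : ι → Ideal R} (hcop : Pairwise fun i j => IsCoprime (P i) (P j)) {v : R}
    (hv : Ideal.span {v} = ∏ j, P j) {i : ι} {n : ℕ} (hn : P i ^ n ≠ P i ^ (n + 1)) :
    v ^ n ∉ P i ^ (n + 1) := by
  classical
  intro hmem
  let Q := ∏ j ∈ Finset.univ.erase i, P j ^ n
  have hle : P i ^ n * Q ≤ P i ^ (n + 1) := by
    rw [Finset.mul_prod_erase _ (fun j => P j ^ n) (Finset.mem_univ i), Finset.prod_pow, ← hv,
      Ideal.span_singleton_pow, Ideal.span_le, Set.singleton_subset_iff]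
    exact hmem
  have hQ : Q ⊔ P i ^ (n + 1) = ⊤ := Ideal.isCoprime_iff_sup_eq.mp <|
    IsCoprime.prod_left fun j hj => (hcop (Finset.ne_of_mem_erase hj)).pow
  refine hn (le_antisymm ?_ (Ideal.pow_le_pow_right n.le_succ))
  calc P i ^ n = P i ^ n * Q ⊔ P i ^ n * P i ^ (n + 1) := by rw [← Ideal.mul_sup, hQ, Ideal.mul_top]
    _ ≤ P i ^ (n + 1) := sup_le hle Ideal.mul_le_right

lemma Ideal.comap_pow_eq_span_pow {R S : Type*} [CommRing R] [IsDomain R]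
    [IsPrincipalIdealRing R] [CommRing S] (f : R →+* S) {p : R} (hp : Prime p) {Q : Ideal S}
    (hpQ : f p ∈ Q) (hpow : ∀ k : ℕ, f p ^ k ∉ Q ^ (k + 1)) (n : ℕ) :
    (Q ^ n).comap f = Ideal.span {p ^ n} := by
  set J := (Q ^ n).comap f
  have hpn : p ^ n ∈ J := by
    rw [Ideal.mem_comap, map_pow]
    exact Ideal.pow_mem_pow hpQ n
  obtain ⟨k, hkn, hk⟩ :=
    (dvd_prime_pow hp n).mp ((Submodule.IsPrincipal.mem_iff_generator_dvd J).mp hpn)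
  have hJ : J = Ideal.span {p ^ k} := by
    rw [← Ideal.span_singleton_generator J, Ideal.span_singleton_eq_span_singleton.mpr hk]
  have hpk : f p ^ k ∈ Q ^ n := by
    have : p ^ k ∈ J := hJ ▸ Ideal.mem_span_singleton_self (p ^ k)
    rwa [Ideal.mem_comap, map_pow] at this
  obtain rfl : k = n :=
    le_antisymm hkn (not_lt.mp fun hlt => hpow k (Ideal.pow_le_pow_right hlt hpk))
  exact hJ

theorem nonempty_quotient_span_X_sub_C_pow_equiv {F O : Type*} [Field F] [CommRing O]
    [Algebra F O] [Algebra F[X] O] [IsScalarTower F F[X] O] {θ : F} {Q : Ideal O} {n : ℕ}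
    (hcomap : (Q ^ n).comap (algebraMap F[X] O) = Ideal.span {(X - C θ) ^ n})
    (hdim : Module.finrank F (O ⧸ Q ^ n) = n) :
    Nonempty ((F[X] ⧸ Ideal.span {(X - C θ) ^ n}) ≃ₗ[F[X]] O ⧸ Q ^ n) := by
  let g := (Ideal.quotientMapₐ (Q ^ n) (Algebra.ofId F[X] O) hcomap.ge).toLinearMap
  have hinj : Function.Injective g := Ideal.quotientMap_injective' (H := hcomap.ge) hcomap.le
  have hsurj : Function.Surjective g := by
    rcases n.eq_zero_or_pos with rfl | hn
    · have : Subsingleton (O ⧸ Q ^ 0) := by simp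
      exact Function.surjective_to_subsingleton g
    have hdom : Module.finrank F (F[X] ⧸ Ideal.span {(X - C θ) ^ n}) = n := by
      rw [finrank_quotient_span_eq_natDegree, natDegree_pow, natDegree_X_sub_C, mul_one]
    have := Module.finite_of_finrank_pos (hdom ▸ hn)
    have := Module.finite_of_finrank_pos (hdim ▸ hn)
    exact (LinearMap.injective_iff_surjective_of_finrank_eq_finrank (hdom.trans hdim.symm)
      (f := g.restrictScalars F)).mp hinj
  exact ⟨LinearEquiv.ofBijective g ⟨hinj, hsurj⟩⟩

/-- let `M` be a CM dual `t`-motive with generalized CM type `(K, Ξ)`,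
`Ξ = Σ_{ξ∈J_K} m_ξ ξ`.  Then `M_{C∞}/σM_{C∞} ≅ ∏_{ξ∈J_K} C∞[t]/((t−θ)^{m_ξ})` as
`C∞[t]`-modules; consequently the Hodge–Pink weights of `M` are `(−m_ξ)_ξ`.

Model (as in the context): `F` plays `C_∞`, `R = F[t]` and `O = O_𝐊 = C∞ ⊗ O_K` is
an `R`-algebra in which the ideal `(t−θ)` splits completely as the product of the
distinct maximal ideals `P ξ`, `ξ ∈ J_K` (a finite index type `ι`), with
`dim_F O/P_ξ^m = m`; `M` is a projective `O`-module of rank one (locally free of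
rank one at every maximal ideal) and `σM = I_Ξ·M` with `I_Ξ = ∏ P_ξ^{m_ξ}`.  The
conclusion is the displayed `F[t]`-linear isomorphism
`M / I_Ξ·M ≅ ∏_ξ F[t]/((X−θ)^{m_ξ})`. -/
theorem cm_dual_t_motive_hodgePink_weights
    (F : Type) [Field F] (θ : F)
    (O : Type) [CommRing O] [Algebra F O] [Algebra (Polynomial F) O]
    [IsScalarTower F (Polynomial F) O]
    (ι : Type) [Fintype ι] (P : ι → Ideal O)
    (hmax : ∀ i, (P i).IsMaximal)
    (hdist : ∀ i j, i ≠ j → P i ≠ P j)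
    (hsplit : Ideal.span {algebraMap (Polynomial F) O (X - C θ)} = ∏ i, P i)
    (hdim : ∀ (i : ι) (n : ℕ), Module.finrank F (O ⧸ (P i ^ n)) = n)
    (M : Type) [AddCommGroup M] [Module O M]
    [Module (Polynomial F) M] [IsScalarTower (Polynomial F) O M]
    [Module.Projective O M]
    (hrk : ∀ (Q : Ideal O) (hQ : Q.IsMaximal),
      Module.rank (Localization (@Ideal.primeCompl O _ Q hQ.isPrime))
        (LocalizedModule (@Ideal.primeCompl O _ Q hQ.isPrime) M) = 1)
    (m : ι → ℕ) :
    Nonempty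
      ((M ⧸ (Submodule.restrictScalars (Polynomial F)
          ((∏ i, P i ^ m i) • (⊤ : Submodule O M)))) ≃ₗ[Polynomial F]
        ((i : ι) → Polynomial F ⧸ Ideal.span {(X - C θ) ^ m i})) := by
  have hcop : Pairwise fun i j => IsCoprime (P i) (P j) := fun i j hij =>
    have := hmax i; have := hmax j; Ideal.isCoprime_of_isMaximal (hdist i j hij)
  have hθ (i : ι) : algebraMap F[X] O (X - C θ) ∈ P i :=
    Ideal.prod_le_inf.trans (Finset.inf_le (Finset.mem_univ i)) <|
      hsplit ▸ Ideal.mem_span_singleton_self _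
  have hθpow (i : ι) (k : ℕ) : algebraMap F[X] O (X - C θ) ^ k ∉ P i ^ (k + 1) :=
    pow_notMem_pow_succ_of_span_eq_prod hcop hsplit fun h => by
      have := hdim i k
      rw [h, hdim] at this
      omega
  have eLoc (i : ι) : Nonempty ((M ⧸ P i ^ m i • (⊤ : Submodule O M)) ≃ₗ[O] O ⧸ P i ^ m i) :=
    have := hmax i
    nonempty_quotient_pow_smul_top_equiv (hrk (P i) (hmax i)) (m i)
  have ePoly (i : ι) :
      Nonempty ((F[X] ⧸ Ideal.span {(X - C θ) ^ m i}) ≃ₗ[F[X]] O ⧸ P i ^ m i) :=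
    nonempty_quotient_span_X_sub_C_pow_equiv
      (Ideal.comap_pow_eq_span_pow _ (prime_X_sub_C θ) (hθ i) (hθpow i) (m i)) (hdim i (m i))
  exact ⟨Submodule.Quotient.restrictScalarsEquiv F[X] _ ≪≫ₗ
    (Submodule.quotientProdSMulTopEquivPi _ fun i j hij => (hcop hij).pow).restrictScalars F[X] ≪≫ₗ
    LinearEquiv.piCongrRight fun i => (eLoc i).some.restrictScalars F[X] ≪≫ₗ (ePoly i).some.symm⟩
end

section
/- Let K be a geometric CM field over F_q(t) with maximal totally real subfield K^+, and fix ξ_0 ∈ J_K. Define Ξ_0 := [K:K^+]·ξ_0 + Σ_{ξ∈J_K, π_{X/X^+}(ξ) ≠ π_{X/X^+}(ξ_0)} ξ ∈ I_K^0. Then Ξ_0 is a non-degenerate generalized CM type: the subgroup I_{Ξ_0}^0 of I_K^0 generated by all Galois conjugates ς(Ξ_0), ς ∈ Gal(k^sep/k), satisfies ℚ ⊗_ℤ I_{Ξ_0}^0 = ℚ ⊗_ℤ I_K^0. Specifically: (i) N_K := Σ_{ξ∈J_K} ξ = (1/[K:F_q(t)]) Σ_{ς∈G_k/H_0} ς(Ξ_0)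 in ℚ⊗I_{Ξ_0}^0, where H_0 is the stabilizer of ξ_0; (ii) for every CM type Ξ = ξ_1+···+ξ_d of K (d = [K^+:F_q(t)]), choosing ς_i ∈ G_k with ς_i(ξ_0) = ξ_i, one has Σ_{i=1}^d ς_i(Ξ_0) = [K:K^+]·Ξ + ([K^+:F_q(t)]−1)·N_K, so Ξ ∈ ℚ⊗I_{Ξ_0}^0. -/
/-!
Every translate `ς(Ξ₀)` has fiber sum `[K:K⁺]` over each point of `J_{K⁺}`, so the translates lie
in `I_K^0`. Since `G` acts transitively on `J_K`, the average of `Ξ₀` over `G` is constant, and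
comparing total masses shows that `Σ_ς ς(Ξ₀) = |G| · N_K`. For a CM type `Ξ` with `ς_i(ξ₀) = ξ_i`,
the translate `ς_i(Ξ₀)` is `[K:K⁺]` at `ξ_i`, vanishes on the rest of its fiber and is `1`
elsewhere; summing gives (ii), and with (i) it puts `|G| [K:K⁺] · Ξ` into `I_{Ξ₀}^0`.
Finally the CM types span `I_K^0` over `ℤ`: if all fiber sums of `Φ` equal `c` and `Ξ` is a CM
type, then `Φ - c Ξ` has zero fiber sums, hence is a combination of the differences
`ξ - ξ'` of two points in one fiber, and each such difference is a difference of two CM types.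
-/

open Finset

/-- The sum of the coefficients of `Φ` over the fiber of `π` above `y`. -/
noncomputable def fiberSum {J Jp : Type} [Fintype J] [DecidableEq Jp]
    (π : J → Jp) (Φ : J → ℤ) (y : Jp) : ℤ :=
  ∑ x ∈ Finset.univ.filter (fun x => π x = y), Φ x

/-- The subgroup `I_K^0` of divisors supported on `J_K` all of whose fiber sums agree. -/
noncomputable def equalFiberSums {J Jp : Type} [Fintype J] [DecidableEq Jp]
    (π : J → Jp) : Submodule ℤ (J → ℤ) where
  carrier := {Φ | ∀ y₁ y₂ : Jp, fiberSum π Φ y₁ = fiberSum π Φ y₂}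
  add_mem' := by
    intro a b ha hb y₁ y₂
    simp only [fiberSum, Pi.add_apply, Finset.sum_add_distrib] at *
    rw [ha y₁ y₂, hb y₁ y₂]
  zero_mem' := by
    intro y₁ y₂
    simp [fiberSum]
  smul_mem' := by
    intro c a ha y₁ y₂
    simp only [fiberSum, Pi.smul_apply, smul_eq_mul, ← Finset.mul_sum] at *
    rw [ha y₁ y₂]

/-- The divisor `Ξ₀ := [K:K⁺]·ξ₀ + Σ_{π ξ ≠ π ξ₀} ξ`. -/
noncomputable def XiZero {J Jp : Type} [DecidableEq J] [DecidableEq Jp]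
    (π : J → Jp) (ξ0 : J) (mK : ℕ) : J → ℤ :=
  fun x => if π x = π ξ0 then (if x = ξ0 then (mK : ℤ) else 0) else 1

/-- The Galois translate `ς(Φ)` of a divisor. -/
def transl {G J : Type} [Group G] [MulAction G J] (g : G) (Φ : J → ℤ) : J → ℤ :=
  fun x => Φ (g⁻¹ • x)

theorem Submodule.smul_mem_of_mem_span {R M : Type*} [CommSemiring R] [AddCommMonoid M]
    [Module R M] {S : Submodule R M} {T : Set M} {r : R} (hT : ∀ t ∈ T, r • t ∈ S) {v : M}
    (hv : v ∈ Submodule.span R T) : r • v ∈ S := by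
  have hspan : Submodule.span R T ≤ S.comap (r • LinearMap.id) :=
    Submodule.span_le.mpr fun t ht => by simpa using hT t ht
  simpa using hspan hv

theorem Fintype.sum_ite_eq_else_one {α R : Type*} [Fintype α] [DecidableEq α]
    [AddCommGroupWithOne R] (a : α) (f : α → R) :
    ∑ y, (if a = y then f y else 1) = f a + (Fintype.card α - 1) := by
  have : Nonempty α := ⟨a⟩
  rw [← Finset.add_sum_erase _ _ (Finset.mem_univ a), if_pos rfl,
    Finset.sum_congr rfl fun y hy => if_neg (Finset.ne_of_mem_erase hy).symm]
  simp [Finset.card_erase_of_mem, Nat.cast_pred Fintype.card_pos]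

section Sections

variable {J Jp : Type*} {π : J → Jp} {s : Jp → J}

theorem Function.LeftInverse.update [DecidableEq Jp] (hs : Function.LeftInverse π s) (x : J) :
    Function.LeftInverse π (Function.update s (π x) x) := fun y => by
  rcases eq_or_ne y (π x) with rfl | hy
  · simp
  · simp [hy, hs y]

theorem Set.indicator_range_apply_of_leftInverse {R : Type*} [Zero R] [One R] [DecidableEq J]
    (hs : Function.LeftInverse π s) (x : J) :
    (Set.range s).indicator (fun _ => (1 : R)) x = if x = s (π x) then 1 else 0 := by
  by_cases h : x = s (π x)
  · rw [if_pos h, Set.indicator_of_mem (Set.mem_range.mpr ⟨π x, h.symm⟩)]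
  · rw [if_neg h, Set.indicator_of_notMem]
    rintro ⟨y, rfl⟩
    exact h (by rw [hs y])

theorem indicator_range_update_sub [DecidableEq J] [DecidableEq Jp]
    (hs : Function.LeftInverse π s) (x : J) :
    (Set.range (Function.update s (π x) x)).indicator (fun _ => (1 : ℤ)) -
        (Set.range s).indicator (fun _ => 1) =
      Pi.single x 1 - Pi.single (s (π x)) 1 := by
  funext z
  simp only [Pi.sub_apply, Set.indicator_range_apply_of_leftInverse (hs.update x),
    Set.indicator_range_apply_of_leftInverse hs, Pi.single_apply]
  by_cases hz : π z = π x
  · simp [hz]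
  · have hzx : z ≠ x := fun h => hz (h ▸ rfl)
    have hzs : z ≠ s (π x) := fun h => hz (by rw [h, hs])
    simp [hz, hzx, hzs]

end Sections

section Transitive

variable {G J M : Type*} [Group G] [Fintype G] [MulAction G J] [MulAction.IsPretransitive G J]
  [AddCommMonoid M]

theorem sum_smul_apply_eq_of_isPretransitive (Φ : J → M) (x x' : J) :
    ∑ g : G, Φ (g • x) = ∑ g : G, Φ (g • x') := by
  obtain ⟨h, rfl⟩ := MulAction.exists_smul_eq G x x'
  exact Fintype.sum_equiv (Equiv.mulRight h⁻¹) _ _ fun g => by simp [mul_smul]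

theorem card_smul_sum_smul_apply [Fintype J] (Φ : J → M) (x : J) :
    Fintype.card J • ∑ g : G, Φ (g • x) = Fintype.card G • ∑ z, Φ z := calc
  Fintype.card J • ∑ g : G, Φ (g • x) = ∑ x' : J, ∑ g : G, Φ (g • x') := by
    rw [← Finset.card_univ, ← Finset.sum_const]
    exact Finset.sum_congr rfl fun x' _ => sum_smul_apply_eq_of_isPretransitive Φ x x'
  _ = ∑ g : G, ∑ z, Φ z := by
    rw [Finset.sum_comm]
    exact Finset.sum_congr rfl fun g _ => Fintype.sum_equiv (MulAction.toPerm g) _ _ fun _ => rfl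
  _ = Fintype.card G • ∑ z, Φ z := by rw [Finset.sum_const, Finset.card_univ]

end Transitive

section FiberSums

variable {J Jp : Type} [Fintype J] [DecidableEq Jp] {π : J → Jp}

theorem fiberSum_transl {G : Type} [Group G] [MulAction G J] [MulAction G Jp]
    (hequiv : ∀ (g : G) (x : J), π (g • x) = g • π x) (g : G) (Φ : J → ℤ) (y : Jp) :
    fiberSum π (transl g Φ) y = fiberSum π Φ (g⁻¹ • y) := by
  simp only [fiberSum, transl, Finset.sum_filter]
  refine Fintype.sum_equiv (MulAction.toPerm g⁻¹) _ _ fun x => ?_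
  simp [hequiv]

theorem transl_mem_equalFiberSums {G : Type} [Group G] [MulAction G J] [MulAction G Jp]
    (hequiv : ∀ (g : G) (x : J), π (g • x) = g • π x) (g : G) {Φ : J → ℤ}
    (hΦ : Φ ∈ equalFiberSums π) : transl g Φ ∈ equalFiberSums π := fun y₁ y₂ => by
  simpa only [fiberSum_transl hequiv] using hΦ _ _

theorem fiberSum_indicator_range [DecidableEq J] {s : Jp → J} (hs : Function.LeftInverse π s)
    (y : Jp) : fiberSum π ((Set.range s).indicator (fun _ => 1)) y = 1 := by
  simp only [fiberSum, Set.indicator_range_apply_of_leftInverse hs]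
  rw [Finset.sum_congr rfl fun x hx => by rw [(Finset.mem_filter.mp hx).2], Finset.sum_ite_eq']
  simp [hs y]

variable [Fintype Jp] [DecidableEq J]

theorem sum_smul_single_comp_eq_zero {Φ : J → ℤ} (hΦ : ∀ y, fiberSum π Φ y = 0) (t : Jp → J) :
    ∑ x, Φ x • (Pi.single (t (π x)) 1 : J → ℤ) = 0 := by
  rw [← Finset.sum_fiberwise _ π]
  refine Finset.sum_eq_zero fun y _ => ?_
  rw [Finset.sum_congr rfl fun x hx => by rw [(Finset.mem_filter.mp hx).2], ← Finset.sum_smul]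
  change fiberSum π Φ y • _ = 0
  rw [hΦ y, zero_smul]

theorem eq_sum_smul_single_sub_of_fiberSum_eq_zero {Φ : J → ℤ}
    (hΦ : ∀ y, fiberSum π Φ y = 0) (t : Jp → J) :
    Φ = ∑ x, Φ x • (Pi.single x 1 - Pi.single (t (π x)) 1) :=
  calc Φ = ∑ x, Φ x • (Pi.single x 1 : J → ℤ) := by
        simp only [← Pi.single_smul', smul_eq_mul, mul_one, Finset.univ_sum_single]
    _ = _ := by
        simp only [smul_sub, Finset.sum_sub_distrib, sum_smul_single_comp_eq_zero hΦ, sub_zero]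

def cmTypes (π : J → Jp) : Set (J → ℤ) :=
  {Ψ | ∃ s : Jp → J, Function.LeftInverse π s ∧ Ψ = (Set.range s).indicator (fun _ => 1)}

theorem equalFiberSums_le_span_cmTypes (hπ : Function.Surjective π) :
    equalFiberSums π ≤ Submodule.span ℤ (cmTypes π) := by
  intro Φ hΦ
  rcases isEmpty_or_nonempty J with hJ | ⟨⟨x₀⟩⟩
  · rw [Subsingleton.elim Φ 0]
    exact zero_mem _
  set s := Function.surjInv hπ
  have hs : Function.LeftInverse π s := Function.surjInv_eq hπ
  have mem : ∀ {t : Jp → J}, Function.LeftInverse π t →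
      (Set.range t).indicator (fun _ => 1) ∈ Submodule.span ℤ (cmTypes π) :=
    fun ht => Submodule.subset_span ⟨_, ht, rfl⟩
  set c := fiberSum π Φ (π x₀)
  set Ψ := Φ - c • (Set.range s).indicator (fun _ => 1)
  have hΨ : ∀ y, fiberSum π Ψ y = 0 := fun y => by
    have := fiberSum_indicator_range hs y
    simp only [fiberSum, Ψ, Pi.sub_apply, Pi.smul_apply, Finset.sum_sub_distrib,
      ← Finset.smul_sum] at this ⊢
    rw [this, smul_eq_mul, mul_one, sub_eq_zero]
    exact hΦ y (π x₀)
  have hdecomp : Φ = c • (Set.range s).indicator (fun _ => 1) + ∑ x, Ψ x •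
      ((Set.range (Function.update s (π x) x)).indicator (fun _ => (1 : ℤ)) -
        (Set.range s).indicator (fun _ => 1)) := by
    simp only [indicator_range_update_sub hs, ← eq_sum_smul_single_sub_of_fiberSum_eq_zero hΨ, Ψ]
    abel
  rw [hdecomp]
  exact add_mem (Submodule.smul_mem _ _ (mem hs)) (Submodule.sum_mem _ fun x _ =>
    Submodule.smul_mem _ _ (sub_mem (mem (hs.update x)) (mem hs)))

end FiberSums

section XiZero

variable {G J Jp : Type} [Group G] [MulAction G J] [DecidableEq J] [DecidableEq Jp] {π : J → Jp}
  {mK : ℕ}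

theorem transl_XiZero_apply [MulAction G Jp] (hequiv : ∀ (g : G) (x : J), π (g • x) = g • π x)
    (ξ0 : J) (g : G) (x : J) : transl g (XiZero π ξ0 mK) x =
      if π x = g • π ξ0 then (if x = g • ξ0 then (mK : ℤ) else 0) else 1 := by
  simp only [transl, XiZero, hequiv, inv_smul_eq_iff]

theorem sum_transl_XiZero_of_leftInverse [MulAction G Jp] [Fintype Jp]
    (hequiv : ∀ (g : G) (x : J), π (g • x) = g • π x)
    {ξ0 : J} {s : Jp → J} (hs : Function.LeftInverse π s) {g : Jp → G}
    (hg : ∀ y, g y • ξ0 = s y) :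
    ∑ y : Jp, transl (g y) (XiZero π ξ0 mK) =
      fun x => (mK : ℤ) * (Set.range s).indicator (fun _ => (1 : ℤ)) x +
        ((Fintype.card Jp : ℤ) - 1) := by
  funext x
  have hgπ : ∀ y, g y • π ξ0 = y := fun y => by rw [← hequiv, hg, hs]
  simp only [Finset.sum_apply, transl_XiZero_apply hequiv, hgπ, hg,
    Fintype.sum_ite_eq_else_one, Set.indicator_range_apply_of_leftInverse hs]
  split_ifs <;> ring

variable [Fintype J]

theorem fiberSum_XiZero (hfib : ∀ y : Jp, (Finset.univ.filter (fun x => π x = y)).card = mK)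
    (ξ0 : J) (y : Jp) : fiberSum π (XiZero π ξ0 mK) y = mK := by
  unfold fiberSum XiZero
  by_cases hy : y = π ξ0
  · subst hy
    rw [Finset.sum_congr rfl fun x hx => if_pos (Finset.mem_filter.mp hx).2, Finset.sum_ite_eq']
    simp
  · rw [Finset.sum_congr rfl fun x hx =>
      if_neg fun h => hy ((Finset.mem_filter.mp hx).2.symm.trans h)]
    simp [hfib]

theorem XiZero_mem_equalFiberSums
    (hfib : ∀ y : Jp, (Finset.univ.filter (fun x => π x = y)).card = mK) (ξ0 : J) :
    XiZero π ξ0 mK ∈ equalFiberSums π := fun y₁ y₂ => by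
  rw [fiberSum_XiZero hfib, fiberSum_XiZero hfib]

variable [Fintype Jp]

theorem sum_XiZero (hfib : ∀ y : Jp, (Finset.univ.filter (fun x => π x = y)).card = mK)
    (ξ0 : J) : ∑ x, XiZero π ξ0 mK x = Fintype.card J := calc
  ∑ x, XiZero π ξ0 mK x = ∑ y, fiberSum π (XiZero π ξ0 mK) y := (Finset.sum_fiberwise _ _ _).symm
  _ = ∑ y, ((Finset.univ.filter (fun x => π x = y)).card : ℤ) := by
    simp only [fiberSum_XiZero hfib, hfib]
  _ = Fintype.card J := by
    rw [← Finset.card_univ, Finset.card_eq_sum_card_fiberwise (f := π) fun x _ => Finset.mem_univ _]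
    push_cast
    rfl

variable [Fintype G] [MulAction.IsPretransitive G J]

theorem sum_transl_XiZero
    (hfib : ∀ y : Jp, (Finset.univ.filter (fun x => π x = y)).card = mK) (ξ0 : J) :
    ∑ g : G, transl g (XiZero π ξ0 mK) = fun _ => (Fintype.card G : ℤ) := by
  funext x
  have hJ : (Fintype.card J : ℤ) ≠ 0 := by
    have : Nonempty J := ⟨ξ0⟩
    exact_mod_cast Fintype.card_ne_zero
  refine mul_left_cancel₀ hJ ?_
  calc (Fintype.card J : ℤ) * (∑ g : G, transl g (XiZero π ξ0 mK)) x
      = Fintype.card J • ∑ g : G, XiZero π ξ0 mK (g • x) := by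
        rw [Finset.sum_apply, nsmul_eq_mul]
        exact congrArg _ (Fintype.sum_equiv (Equiv.inv G) _ _ fun _ => rfl)
    _ = Fintype.card G • ∑ z, XiZero π ξ0 mK z := card_smul_sum_smul_apply _ x
    _ = Fintype.card J * Fintype.card G := by rw [sum_XiZero hfib, nsmul_eq_mul, mul_comm]

theorem card_mul_smul_mem_span_transl_XiZero [MulAction G Jp]
    (hequiv : ∀ (g : G) (x : J), π (g • x) = g • π x)
    (hfib : ∀ y : Jp, (Finset.univ.filter (fun x => π x = y)).card = mK) (ξ0 : J)
    {Ψ : J → ℤ} (hΨ : Ψ ∈ cmTypes π) :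
    ((Fintype.card G : ℤ) * mK) • Ψ ∈
      Submodule.span ℤ {Φ' : J → ℤ | ∃ g : G, Φ' = transl g (XiZero π ξ0 mK)} := by
  obtain ⟨s, hs, rfl⟩ := hΨ
  set S := Submodule.span ℤ {Φ' : J → ℤ | ∃ g : G, Φ' = transl g (XiZero π ξ0 mK)}
  have hmem : ∀ g : G, transl g (XiZero π ξ0 mK) ∈ S := fun g => Submodule.subset_span ⟨g, rfl⟩
  have hN : (fun _ => (Fintype.card G : ℤ)) ∈ S :=
    sum_transl_XiZero (G := G) hfib ξ0 ▸ Submodule.sum_mem S fun g _ => hmem g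
  choose g hg using fun y => MulAction.exists_smul_eq G ξ0 (s y)
  have hΞ := sum_transl_XiZero_of_leftInverse hequiv hs hg ▸
    Submodule.sum_mem S fun y _ => hmem (g y)
  convert sub_mem (S.smul_mem (Fintype.card G : ℤ) hΞ)
    (S.smul_mem ((Fintype.card Jp : ℤ) - 1) hN) using 1
  funext x
  simp only [Pi.smul_apply, Pi.sub_apply, smul_eq_mul]
  ring

end XiZero

/-- Conclusion (i) is summed over all of `G` instead of `G/H₀`, which multiplies both sides by
`|H₀| = |G| / [K : F_q(t)]`. Conclusion (iii) encodes `ℚ ⊗ I_{Ξ₀}^0 = ℚ ⊗ I_K^0`. -/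
theorem XiZero_nondegenerate
    (G : Type) [Group G] [Fintype G]
    {J Jp : Type} [Fintype J] [Fintype Jp] [DecidableEq J] [DecidableEq Jp]
    [MulAction G J] [MulAction G Jp]
    (π : J → Jp) (hequiv : ∀ (g : G) (x : J), π (g • x) = g • π x)
    (hπsurj : Function.Surjective π)
    (htrans : ∀ x y : J, ∃ g : G, g • x = y)
    (mK : ℕ) (hmK : 0 < mK)
    (hfib : ∀ y : Jp, (Finset.univ.filter (fun x => π x = y)).card = mK)
    (ξ0 : J) :
    -- (0)
    (Submodule.span ℤ {Φ : J → ℤ | ∃ g : G, Φ = transl g (XiZero π ξ0 mK)} ≤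
      equalFiberSums π) ∧
    -- (i)
    ((∑ g : G, transl g (XiZero π ξ0 mK)) = fun _ => (Fintype.card G : ℤ)) ∧
    -- (ii)
    (∀ s : Jp → J, (∀ y, π (s y) = y) →
      ∀ g : Jp → G, (∀ y, g y • ξ0 = s y) →
      (∑ y : Jp, transl (g y) (XiZero π ξ0 mK)) =
        fun x => (mK : ℤ) * Set.indicator (Set.range s) (fun _ => (1 : ℤ)) x +
          ((Fintype.card Jp : ℤ) - 1)) ∧
    -- (iii)
    (∀ Φ ∈ equalFiberSums π, ∃ nz : ℤ, nz ≠ 0 ∧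
      nz • Φ ∈ Submodule.span ℤ
        {Φ' : J → ℤ | ∃ g : G, Φ' = transl g (XiZero π ξ0 mK)}) := by
  have : MulAction.IsPretransitive G J := ⟨htrans⟩
  refine ⟨Submodule.span_le.mpr ?_, sum_transl_XiZero hfib ξ0,
    fun s hs g hg => sum_transl_XiZero_of_leftInverse hequiv hs hg, fun Φ hΦ => ⟨_, ?_,
      Submodule.smul_mem_of_mem_span
        (fun _ hΨ => card_mul_smul_mem_span_transl_XiZero hequiv hfib ξ0 hΨ)
        (equalFiberSums_le_span_cmTypes hπsurj hΦ)⟩⟩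
  · rintro _ ⟨g, rfl⟩
    exact transl_mem_equalFiberSums hequiv g (XiZero_mem_equalFiberSums hfib ξ0)
  · exact mul_ne_zero (Nat.cast_ne_zero.mpr Fintype.card_ne_zero) (Nat.cast_ne_zero.mpr hmK.ne')
end
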